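/- Let M₁ and M₂ be Hermitian positive definite complex n × n matrices with M₂ − M₁ positive semidefinite, and let C be a Hermitian positive semidefinite complex n × n matrix. Then all four determinants det(M₁), det(M₂), det(M₁ + C), det(M₂ + C) are positive real numbers and satisfy det(M₂ + C) · det(M₁) ≤ det(M₁ + C) · det(M₂). Equivalently, the function M ↦ log det(I + M⁻¹ C) is antitone in the Loewner order on positive definite matrices. -/

import Mathlib

/-!
Write `C = Sᴴ S`. The matrix determinant lemma gives `det (M + C) = det M · det (1 + S M⁻¹ Sᴴ)`,
so the claim is `det (1 + S M₂⁻¹ Sᴴ) ≤ det (1 + S M₁⁻¹ Sᴴ)`. Inversion is operator antitone, hence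
`S M₂⁻¹ Sᴴ ⪯ S M₁⁻¹ Sᴴ`, and the determinant is monotone on positive definite matrices: by the same
lemma `det (A + Tᴴ T) = det A · det (1 + T A⁻¹ Tᴴ)`, whose second factor is a product of eigenvalues
`1 + λᵢ ≥ 1`.
-/

open Matrix
open scoped ComplexOrder MatrixOrder

namespace Matrix

variable {𝕜 : Type*} [RCLike 𝕜] {n : Type*} [Fintype n] [DecidableEq n]

lemma PosSemidef.one_le_det_one_add {X : Matrix n n 𝕜} (hX : X.PosSemidef) :
    1 ≤ (1 + X).det := by
  set U := hX.isHermitian.eigenvectorUnitary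
  have hdiag : 1 + X = Unitary.conjStarAlgAut 𝕜 _ U
      (diagonal fun i => 1 + (hX.isHermitian.eigenvalues i : 𝕜)) := by
    rw [← diagonal_add, diagonal_one, map_add, map_one]
    exact congrArg _ hX.isHermitian.spectral_theorem
  rw [hdiag, Unitary.conjStarAlgAut_apply, det_mul, det_mul, mul_right_comm, ← det_mul,
    Unitary.mul_star_self_of_mem U.2, det_one, one_mul, det_diagonal]
  exact Finset.one_le_prod fun i _ => le_add_of_nonneg_right (by simpa using hX.eigenvalues_nonneg i)

lemma PosDef.det_le_det {A B : Matrix n n 𝕜} (hA : A.PosDef) (hAB : A ≤ B) : A.det ≤ B.det := by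
  obtain ⟨S, hS⟩ := CStarAlgebra.nonneg_iff_eq_star_mul_self.mp (sub_nonneg.mpr hAB)
  have hB : B = A + star S * S := by rw [← hS]; abel
  rw [hB, det_add_mul _ _ hA.det_pos.ne'.isUnit]
  calc A.det = A.det * 1 := (mul_one _).symm
    _ ≤ A.det * (1 + S * A⁻¹ * star S).det := by
      gcongr
      · exact hA.det_pos.le
      · exact (hA.inv.posSemidef.mul_mul_conjTranspose_same S).one_le_det_one_add

open scoped Matrix.Norms.L2Operator in
lemma PosDef.inv_le_inv {A B : Matrix n n ℂ} (hA : A.PosDef) (hAB : A ≤ B) : B⁻¹ ≤ A⁻¹ := by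
  rw [nonsing_inv_eq_ringInverse, nonsing_inv_eq_ringInverse]
  exact CStarAlgebra.ringInverse_le_ringInverse hAB (isStrictlyPositive_iff_posDef.mpr hA)

end Matrix

/-- For Hermitian positive definite `M₁ ⪯ M₂` (Loewner order) and PSD `C`, all the
determinants are positive reals and `det(M₂ + C) det(M₁) ≤ det(M₁ + C) det(M₂)`;
equivalently, `M ↦ log det(I + M⁻¹ C)` is antitone in the Loewner order. -/
theorem logdet_leakage_antitone_loewner {n : ℕ}
    {M₁ M₂ C : Matrix (Fin n) (Fin n) ℂ}
    (h₁ : M₁.PosDef) (h₂ : M₂.PosDef) (h : (M₂ - M₁).PosSemidef)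
    (hC : C.PosSemidef) :
    0 < M₁.det ∧ 0 < M₂.det ∧ 0 < (M₁ + C).det ∧ 0 < (M₂ + C).det ∧
      (M₂ + C).det * M₁.det ≤ (M₁ + C).det * M₂.det := by
  refine ⟨h₁.det_pos, h₂.det_pos, (h₁.add_posSemidef hC).det_pos,
    (h₂.add_posSemidef hC).det_pos, ?_⟩
  obtain ⟨S, rfl⟩ := CStarAlgebra.nonneg_iff_eq_star_mul_self.mp hC.nonneg
  have hinv : M₂⁻¹ ≤ M₁⁻¹ := h₁.inv_le_inv (le_iff.mpr h)
  have hdet : (1 + S * M₂⁻¹ * star S).det ≤ (1 + S * M₁⁻¹ * star S).det :=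
    (PosDef.one.add_posSemidef (h₂.inv.posSemidef.mul_mul_conjTranspose_same S)).det_le_det
      (add_le_add_right (star_right_conjugate_le_conjugate hinv S) 1)
  rw [det_add_mul _ _ h₁.det_pos.ne'.isUnit, det_add_mul _ _ h₂.det_pos.ne'.isUnit]
  calc M₂.det * (1 + S * M₂⁻¹ * star S).det * M₁.det
      ≤ M₂.det * (1 + S * M₁⁻¹ * star S).det * M₁.det := by
        gcongr
        · exact h₁.det_pos.le
        · exact h₂.det_pos.le
    _ = M₁.det * (1 + S * M₁⁻¹ * star S).det * M₂.det := by ring
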